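/- Let D be a dominion of player α in a parity game with winning strategy σ, and let π ∈ Plays(D, σ) be any play in D consistent with σ. Then the pair (inf(π), σ restricted to inf(π)) is a tangle whose highest priority max{pr(v) : v ∈ inf(π)} has α's parity. -/

import Mathlib

open scoped Classical

/-- A parity game on a finite vertex type `V`.  Player `false` is Even and
player `true` is Odd; `owner v` is the player controlling vertex `v`,
`edge` is the (left-total) move relation and `pr` assigns priorities. -/
structure ParityGame (V : Type) [Fintype V] where
  owner : V → Bool
  edge : V → V → Prop
  total : ∀ v, ∃ w, edge v w
  pr : V → ℕ

namespace ParityGame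

variable {V : Type} [Fintype V] (G : ParityGame V)

/-- The player whose parity matches the priority `p` (`false` = Even, `true` = Odd). -/
def playerOf (p : ℕ) : Bool := decide (p % 2 = 1)

/-- A play is an infinite sequence of vertices consistent with the edge relation. -/
def IsPlay (π : ℕ → V) : Prop := ∀ i, G.edge (π i) (π (i + 1))

/-- The set of vertices occurring infinitely often in `π`. -/
def infOcc (π : ℕ → V) : Set V := {v | ∀ n : ℕ, ∃ m, n ≤ m ∧ π m = v}

/-- The highest priority of a vertex in `S`. -/
noncomputable def maxPr (S : Set V) : ℕ := sSup (G.pr '' S)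

/-- Player `α` wins the play `π` iff the highest priority occurring infinitely
often in `π` has `α`'s parity. -/
def Wins (α : Bool) (π : ℕ → V) : Prop := playerOf (G.maxPr (infOcc π)) = α

/-- A (positional, partial) strategy for player `α`. -/
def IsStrategy (α : Bool) (σ : V → Option V) : Prop :=
  ∀ v w, σ v = some w → G.owner v = α ∧ G.edge v w

/-- A play is consistent with the strategy `σ`. -/
def Consistent (σ : V → Option V) (π : ℕ → V) : Prop :=
  ∀ i w, σ (π i) = some w → π (i + 1) = w

/-- All plays starting in `U` that are consistent with `σ`. -/
def PlaysFrom (U : Set V) (σ : V → Option V) : Set (ℕ → V) :=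
  {π | G.IsPlay π ∧ π 0 ∈ U ∧ Consistent σ π}

/-- `U` is closed with respect to player `α`: every `α`-vertex of `U` has a
successor in `U` and every opponent vertex of `U` has all successors in `U`. -/
def ClosedFor (α : Bool) (U : Set V) : Prop :=
  (∀ v ∈ U, G.owner v = α → ∃ w ∈ U, G.edge v w) ∧
  (∀ v ∈ U, G.owner v ≠ α → ∀ w, G.edge v w → w ∈ U)

/-- `D` is an `α`-dominion with (winning) strategy `σ`: `D` is closed for `α`,
`σ` is a strategy of `α` defined on all `α`-vertices of `D` with values in `D`,
and `α` wins every consistent play from `D`. -/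
def IsDominionWith (α : Bool) (D : Set V) (σ : V → Option V) : Prop :=
  G.ClosedFor α D ∧ G.IsStrategy α σ ∧
  (∀ v ∈ D, G.owner v = α → ∃ w ∈ D, σ v = some w) ∧
  ∀ π ∈ G.PlaysFrom D σ, G.Wins α π

/-- `D` is an `α`-dominion. -/
def IsDominion (α : Bool) (D : Set V) : Prop := ∃ σ, G.IsDominionWith α D σ

/-- The value of a play: the highest priority occurring infinitely often. -/
noncomputable def playValue (π : ℕ → V) : ℕ := G.maxPr (infOcc π)

/-- `D` is a `p`-dominion with winning strategy `σ`: a dominion such that `p` is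
the maximum, over all consistent plays from `D`, of the highest priority seen
infinitely often. -/
def IsPDominionWith (α : Bool) (p : ℕ) (D : Set V) (σ : V → Option V) : Prop :=
  G.IsDominionWith α D σ ∧ IsGreatest (G.playValue '' G.PlaysFrom D σ) p

/-- `D` is a `p`-dominion for player `α`. -/
def IsPDominion (α : Bool) (p : ℕ) (D : Set V) : Prop := ∃ σ, G.IsPDominionWith α p D σ

/-- The edges of the subgame `G[U,σ]` induced by `U` and the strategy `σ`. -/
def subEdge (U : Set V) (σ : V → Option V) (u v : V) : Prop :=
  u ∈ U ∧ v ∈ U ∧ G.edge u v ∧ (σ u = none ∨ σ u = some v)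

/-- `G[U,σ]` is strongly connected. -/
def StronglyConnected (U : Set V) (σ : V → Option V) : Prop :=
  ∀ u ∈ U, ∀ v ∈ U, Relation.ReflTransGen (G.subEdge U σ) u v

/-- A cycle of `G[U,σ]`: from `v` through the list `l` back to `v`. -/
def IsCycle (U : Set V) (σ : V → Option V) (v : V) (l : List V) : Prop :=
  List.Chain (G.subEdge U σ) v (l ++ [v])

/-- Player `α` wins all cycles of `G[U,σ]`: the maximum priority on every cycle
has `α`'s parity. -/
def WinsAllCycles (α : Bool) (U : Set V) (σ : V → Option V) : Prop :=
  ∀ v l, G.IsCycle U σ v l → playerOf (G.maxPr {x | x ∈ v :: l}) = α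

/-- `(U, σ)` is a tangle: `U` is nonempty, `σ` is a strategy for the player `α`
of the parity of the highest priority of `U`, defined exactly on the
`α`-vertices of `U` with values in `U`, the subgame `G[U,σ]` is strongly
connected, and player `α` wins all cycles of `G[U,σ]`. -/
def IsTangle (U : Set V) (σ : V → Option V) : Prop :=
  U.Nonempty ∧
  (∀ v w, σ v = some w → v ∈ U ∧ w ∈ U ∧ G.owner v = playerOf (G.maxPr U) ∧ G.edge v w) ∧
  (∀ v ∈ U, G.owner v = playerOf (G.maxPr U) → (σ v).isSome) ∧
  G.StronglyConnected U σ ∧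
  G.WinsAllCycles (playerOf (G.maxPr U)) U σ

/-- The escapes `E_T(T)` of a tangle with vertex set `U`: the successors outside
`U` of the opponent's vertices in `U`. -/
def escapes (U : Set V) : Set V :=
  {v | v ∉ U ∧ ∃ u ∈ U, G.owner u ≠ playerOf (G.maxPr U) ∧ G.edge u v}

/-- The restriction of a strategy to a set `U`. -/
noncomputable def restrict (σ : V → Option V) (U : Set V) : V → Option V :=
  fun v => if v ∈ U then σ v else none

/-- The attractor of `A` for player `α`: the least fixpoint of
`Z := A ∪ {v ∈ V_α | E(v) ∩ Z ≠ ∅} ∪ {v ∈ V_ᾱ | E(v) ⊆ Z}`. -/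
inductive Attr (α : Bool) (A : Set V) : V → Prop
  | base : ∀ v, v ∈ A → Attr α A v
  | step : ∀ v w, G.owner v = α → G.edge v w → Attr α A w → Attr α A v
  | forced : ∀ v, G.owner v ≠ α → (∀ w, G.edge v w → Attr α A w) → Attr α A v

/-- The attractor of `A` for player `α`, as a set. -/
def attrSet (α : Bool) (A : Set V) : Set V := {v | G.Attr α A v}

/-- The tangle attractor of `A` for player `α` with tangle set `TT`: the least
fixpoint additionally attracting all vertices of `α`-tangles of `TT` whose
escapes all lie in the attracting set. -/
inductive TAttr (α : Bool) (TT : Set (Set V × (V → Option V))) (A : Set V) : V → Prop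
  | base : ∀ v, v ∈ A → TAttr α TT A v
  | step : ∀ v w, G.owner v = α → G.edge v w → TAttr α TT A w → TAttr α TT A v
  | forced : ∀ v, G.owner v ≠ α → (∀ w, G.edge v w → TAttr α TT A w) → TAttr α TT A v
  | tangle : ∀ (U : Set V) (τ : V → Option V) (v : V), (U, τ) ∈ TT →
      G.IsTangle U τ → playerOf (G.maxPr U) = α →
      (∀ w ∈ G.escapes U, TAttr α TT A w) → v ∈ U → TAttr α TT A v

/-- The tangle attractor of `A` for player `α`, as a set. -/
def tattrSet (α : Bool) (TT : Set (Set V × (V → Option V))) (A : Set V) : Set V :=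
  {v | G.TAttr α TT A v}

end ParityGame

/-! A play of the dominion eventually stays inside `inf(π)`, so its tail is a walk of
`G[inf(π), σ]` that visits every vertex of `inf(π)` infinitely often: this gives strong
connectivity. Conversely, every cycle of `G[D, σ]` unrolls to a periodic play consistent with `σ`
whose recurring vertices are exactly those of the cycle, so `α` wins it. -/

section CycleSeq

variable {β : Type*}

def cycleSeq (v : β) (l : List β) (k : ℕ) : β :=
  (v :: l)[k % (l.length + 1)]'(Nat.mod_lt _ l.length.succ_pos)

lemma cycleSeq_periodic (v : β) (l : List β) :
    Function.Periodic (cycleSeq v l) (l.length + 1) := by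
  intro k
  simp only [cycleSeq, Nat.add_mod_right]

lemma range_cycleSeq (v : β) (l : List β) : Set.range (cycleSeq v l) = {x | x ∈ v :: l} := by
  ext x
  constructor
  · rintro ⟨k, rfl⟩
    exact List.getElem_mem _
  · intro hx
    obtain ⟨i, hi, rfl⟩ := List.getElem_of_mem hx
    exact ⟨i, by simp only [cycleSeq, Nat.mod_eq_of_lt (show i < l.length + 1 from hi)]⟩

lemma getElem_cons_append_singleton_eq_cycleSeq (v : β) (l : List β) {j : ℕ}
    (hj : j < (v :: (l ++ [v])).length) : (v :: (l ++ [v]))[j] = cycleSeq v l j := by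
  rcases Nat.lt_or_ge j (l.length + 1) with hjl | hjl
  · simp only [cycleSeq, Nat.mod_eq_of_lt hjl, ← List.cons_append]
    exact List.getElem_append_left hjl
  · have hj' : j = l.length + 1 := by
      simp only [List.length_cons, List.length_append, List.length_nil] at hj; omega
    subst hj'
    simp [cycleSeq]

lemma List.IsChain.rel_cycleSeq {R : β → β → Prop} {v : β} {l : List β}
    (h : List.IsChain R (v :: (l ++ [v]))) (k : ℕ) : R (cycleSeq v l k) (cycleSeq v l (k + 1)) := by
  have hper := cycleSeq_periodic v l
  set i := k % (l.length + 1)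
  have hi : i < l.length + 1 := Nat.mod_lt _ l.length.succ_pos
  have hstep := h.getElem i <| by
    simp only [List.length_cons, List.length_append, List.length_nil]; omega
  rw [getElem_cons_append_singleton_eq_cycleSeq, getElem_cons_append_singleton_eq_cycleSeq] at hstep
  have hnext : (i + 1) % (l.length + 1) = (k + 1) % (l.length + 1) := by
    simp only [i, Nat.add_mod, Nat.mod_mod]
  rw [← hper.map_mod_nat (i + 1), hnext] at hstep
  rwa [← hper.map_mod_nat k, ← hper.map_mod_nat (k + 1)]

end CycleSeq

namespace ParityGame

section

variable {V : Type}

lemma mem_infOcc_iff {π : ℕ → V} {v : V} : v ∈ infOcc π ↔ ∃ᶠ n in Filter.atTop, π n = v :=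
  Filter.frequently_atTop.symm

lemma infOcc_nonempty [Finite V] (π : ℕ → V) : (infOcc π).Nonempty := by
  obtain ⟨v, hv⟩ := Finite.exists_infinite_fiber π
  exact ⟨v, mem_infOcc_iff.2 (Nat.frequently_atTop_iff_infinite.2 (Set.infinite_coe_iff.1 hv))⟩

lemma eventually_mem_infOcc [Finite V] (π : ℕ → V) : ∀ᶠ n in Filter.atTop, π n ∈ infOcc π := by
  have hleave : ∀ v, ∀ᶠ n in Filter.atTop, v ∉ infOcc π → π n ≠ v := fun v => by
    by_cases hv : v ∈ infOcc π
    · exact Filter.Eventually.of_forall fun _ h => absurd hv h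
    · exact (Filter.not_frequently.1 (mt mem_infOcc_iff.2 hv)).mono fun _ hn _ => hn
  filter_upwards [Filter.eventually_all.2 hleave] with n hn
  by_contra hout
  exact hn (π n) hout rfl

lemma infOcc_subset_range (π : ℕ → V) : infOcc π ⊆ Set.range π := fun _ hv =>
  let ⟨m, _, hm⟩ := hv 0
  ⟨m, hm⟩

lemma infOcc_eq_range_of_periodic {π : ℕ → V} {p : ℕ} (hπ : Function.Periodic π p) (hp : 0 < p) :
    infOcc π = Set.range π := by
  refine (infOcc_subset_range π).antisymm ?_
  rintro _ ⟨i, rfl⟩ n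
  exact ⟨i + n * p, by nlinarith, by simpa using hπ.nat_mul n i⟩

lemma infOcc_cycleSeq (v : V) (l : List V) : infOcc (cycleSeq v l) = {x | x ∈ v :: l} := by
  rw [infOcc_eq_range_of_periodic (cycleSeq_periodic v l) l.length.succ_pos, range_cycleSeq]

lemma mem_infOcc_of_consistent {σ : V → Option V} {π : ℕ → V} (hcons : Consistent σ π)
    {v w : V} (hv : v ∈ infOcc π) (hw : σ v = some w) : w ∈ infOcc π := fun n =>
  let ⟨m, hnm, hm⟩ := hv n
  ⟨m + 1, hnm.trans m.le_succ, hcons m w (hm ▸ hw)⟩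

lemma restrict_of_mem {σ : V → Option V} {U : Set V} {v : V} (hv : v ∈ U) :
    restrict σ U v = σ v :=
  if_pos hv

lemma restrict_eq_some {σ : V → Option V} {U : Set V} {v w : V} :
    restrict σ U v = some w ↔ v ∈ U ∧ σ v = some w := by
  by_cases hv : v ∈ U <;> simp [restrict, hv]

end

variable {V : Type} [Fintype V] {G : ParityGame V} {α : Bool} {D U : Set V} {σ : V → Option V}

lemma subEdge_restrict_of_consistent {π : ℕ → V} (hplay : G.IsPlay π) (hcons : Consistent σ π)
    {k : ℕ} (hk : π k ∈ U) (hk1 : π (k + 1) ∈ U) :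
    G.subEdge U (restrict σ U) (π k) (π (k + 1)) := by
  refine ⟨hk, hk1, hplay k, ?_⟩
  rw [restrict_of_mem hk]
  cases hσ : σ (π k) with
  | none => exact Or.inl rfl
  | some w => exact Or.inr (by rw [hcons k w hσ])

lemma subEdge_of_subEdge_restrict (hU : U ⊆ D) {u v : V} (h : G.subEdge U (restrict σ U) u v) :
    G.subEdge D σ u v := by
  obtain ⟨hu, hv, he, hσ⟩ := h
  exact ⟨hU hu, hU hv, he, by rwa [restrict_of_mem hu] at hσ⟩

lemma consistent_of_forall_subEdge {ρ : ℕ → V} (h : ∀ k, G.subEdge U σ (ρ k) (ρ (k + 1))) :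
    Consistent σ ρ := by
  intro k w hw
  rcases (h k).2.2.2 with hnone | hsome
  · rw [hw] at hnone
    cases hnone
  · rw [hw] at hsome
    exact (Option.some.inj hsome).symm

lemma stronglyConnected_infOcc {π : ℕ → V} (hplay : G.IsPlay π) (hcons : Consistent σ π) :
    G.StronglyConnected (infOcc π) (restrict σ (infOcc π)) := by
  obtain ⟨N, hN⟩ := Filter.eventually_atTop.1 (eventually_mem_infOcc π)
  intro u hu v hv
  obtain ⟨i, hNi, rfl⟩ := hu N
  obtain ⟨j, hij, rfl⟩ := hv i
  have hsteps : ∀ k ∈ Set.Ico i j,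
      G.subEdge (infOcc π) (restrict σ (infOcc π)) (π k) (π (Order.succ k)) := fun k hk => by
    rw [Order.succ_eq_add_one]
    exact subEdge_restrict_of_consistent hplay hcons (hN k (hNi.trans hk.1))
      (hN _ (hNi.trans (hk.1.trans k.le_succ)))
  exact (reflTransGen_of_succ_of_le _ hsteps hij).lift π fun _ _ h => h

lemma WinsAllCycles.restrict_of_subset (hwin : G.WinsAllCycles α D σ) (hU : U ⊆ D) :
    G.WinsAllCycles α U (restrict σ U) := fun v l hc =>
  hwin v l (List.IsChain.imp (fun _ _ => subEdge_of_subEdge_restrict hU) hc)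

lemma IsDominionWith.apply_mem (h : G.IsDominionWith α D σ) {π : ℕ → V}
    (hπ : π ∈ G.PlaysFrom D σ) (i : ℕ) : π i ∈ D := by
  obtain ⟨⟨-, hclosed⟩, -, hdef, -⟩ := h
  obtain ⟨hplay, h0, hcons⟩ := hπ
  induction i with
  | zero => exact h0
  | succ i ih =>
    by_cases ho : G.owner (π i) = α
    · obtain ⟨w, hwD, hw⟩ := hdef (π i) ih ho
      rwa [hcons i w hw]
    · exact hclosed (π i) ih ho (π (i + 1)) (hplay i)

lemma IsDominionWith.winsAllCycles (h : G.IsDominionWith α D σ) : G.WinsAllCycles α D σ := by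
  obtain ⟨-, -, -, hwins⟩ := h
  intro v l hc
  have hstep := List.IsChain.rel_cycleSeq hc
  have hwin := hwins (cycleSeq v l)
    ⟨fun k => (hstep k).2.2.1, (hstep 0).1, consistent_of_forall_subEdge hstep⟩
  rwa [Wins, infOcc_cycleSeq] at hwin

/-- for any play `π` of a dominion `D` consistent with the winning
strategy `σ`, `(inf(π), σ|inf(π))` is a tangle whose highest priority has `α`'s
parity. -/
theorem infOcc_is_tangle (G : ParityGame V) (α : Bool) (D : Set V)
    (σ : V → Option V) (h : G.IsDominionWith α D σ)
    (π : ℕ → V) (hπ : π ∈ G.PlaysFrom D σ) :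
    G.IsTangle (infOcc π) (restrict σ (infOcc π)) ∧
      playerOf (G.maxPr (infOcc π)) = α := by
  have hsub : infOcc π ⊆ D :=
    (infOcc_subset_range π).trans (Set.range_subset_iff.2 (h.apply_mem hπ))
  have hcycles := h.winsAllCycles.restrict_of_subset hsub
  obtain ⟨-, hstrat, hdef, hwins⟩ := h
  have hwin : playerOf (G.maxPr (infOcc π)) = α := hwins π hπ
  obtain ⟨hplay, -, hcons⟩ := hπ
  refine ⟨⟨infOcc_nonempty π, ?_, ?_, stronglyConnected_infOcc hplay hcons, hwin ▸ hcycles⟩, hwin⟩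
  · intro v w hvw
    obtain ⟨hv, hσ⟩ := restrict_eq_some.1 hvw
    obtain ⟨hown, hedge⟩ := hstrat v w hσ
    exact ⟨hv, mem_infOcc_of_consistent hcons hv hσ, hown.trans hwin.symm, hedge⟩
  · intro v hv hown
    obtain ⟨w, -, hw⟩ := hdef v (hsub hv) (hown.trans hwin)
    simp [restrict_of_mem hv, hw]

end ParityGame
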